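/- arXiv:1308.6182 — 5 statements merged into one kernel-verified Lean document; each statement's English description precedes it below -/
import Mathlib

section
/- Let e_0, …, e_n be a basis of the rational vector space ℚ^{n+1}. Then the vectors V := ∑_{k=0}^n (-1)^{n-k} k! (n-k)! e_k and R(ℓ) := ∑_{k≥ℓ} C(k,ℓ) e_k for 0 ≤ ℓ ≤ n-1 together form a basis of ℚ^{n+1}. -/
/-!
The first `n` vectors `R(ℓ)` are part of the Pascal family, whose coordinate matrix is
unitriangular, so they are independent. The functional taking the `n`-th forward difference at `0`
of the coordinate sequence, `x ↦ ∑ (-1)^{n-k} C(n,k) x_k`, kills every `R(ℓ)` with `ℓ < n`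
(as `k ↦ C(k,ℓ)` is a polynomial of degree `ℓ < n`) but sends `V` to `(n+1)!`; hence `V` lies
outside their span, and `n + 1` independent vectors in `ℚ^{n+1}` form a basis.
-/

open Finset Module

lemma sum_neg_one_pow_mul_choose_mul_choose {R : Type*} [CommRing R] (n m : ℕ) :
    ∑ k : Fin (n + 1), (-1 : R) ^ (n - k) * n.choose k * (k : ℕ).choose m =
      if n = m then 1 else 0 := by
  have h := fwdDiff_iter_choose_zero m n
  rw [fwdDiff_iter_eq_sum_shift] at h
  rw [Fin.sum_univ_eq_sum_range (fun k => (-1 : R) ^ (n - k) * n.choose k * k.choose m)]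
  simpa using congrArg (Int.cast : ℤ → R) h

lemma neg_one_pow_mul_choose_mul_factorial {R : Type*} [CommRing R] {n k : ℕ} (hk : k ≤ n) :
    (-1 : R) ^ (n - k) * n.choose k * ((-1) ^ (n - k) * Nat.factorial k * Nat.factorial (n - k)) =
      Nat.factorial n := by
  have hsign : (-1 : R) ^ (n - k) * (-1) ^ (n - k) = 1 := by rw [← mul_pow]; simp
  rw [← Nat.choose_mul_factorial_mul_factorial hk]
  push_cast
  linear_combination (n.choose k * Nat.factorial k * Nat.factorial (n - k) : R) * hsign

lemma Module.Basis.sum_smul_coord_apply_sum_smul {ι R M : Type*} [Fintype ι] [CommRing R]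
    [AddCommGroup M] [Module R M] (b : Basis ι R M) (a c : ι → R) :
    (∑ i, a i • b.coord i) (∑ j, c j • b j) = ∑ i, a i * c i := by
  simp only [LinearMap.sum_apply, LinearMap.smul_apply, Basis.coord_apply,
    b.repr_sum_self, smul_eq_mul]

lemma Module.Basis.linearIndependent_sum_choose_smul {R M : Type*} [CommRing R] [AddCommGroup M]
    [Module R M] {m : ℕ} (b : Basis (Fin m) R M) :
    LinearIndependent R fun l : Fin m => ∑ k : Fin m, ((k : ℕ).choose l : R) • b k := by
  refine (b.is_basis_iff_det.2 ?_).1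
  have hpascal : b.toMatrix (fun l : Fin m => ∑ k : Fin m, ((k : ℕ).choose l : R) • b k) =
      Matrix.of fun k l : Fin m => ((k : ℕ).choose l : R) := by
    ext k l
    rw [Basis.toMatrix_apply, b.repr_sum_self]
    rfl
  have htri : (Matrix.of fun k l : Fin m => ((k : ℕ).choose l : R)).IsLowerTriangular :=
    fun k l hlk => by simp [Nat.choose_eq_zero_of_lt (show (k : ℕ) < l from hlk)]
  simp [Basis.det_apply, hpascal, Matrix.det_of_isLowerTriangular _ htri]

lemma LinearIndependent.finSnoc_of_map_eq_zero {K V : Type*} [DivisionRing K] [AddCommGroup V]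
    [Module K V] {n : ℕ} {v : Fin n → V} {x : V} (hv : LinearIndependent K v) (φ : V →ₗ[K] K)
    (hφv : ∀ i, φ (v i) = 0) (hφx : φ x ≠ 0) :
    LinearIndependent K (Fin.snoc v x : Fin (n + 1) → V) :=
  hv.finSnoc fun hx => hφx <|
    Submodule.span_le (p := LinearMap.ker φ).2 (Set.range_subset_iff.2 hφv) hx

/-- Given a basis `e_0, …, e_n` of `ℚ^{n+1}`, the vectors
`V = ∑ (-1)^{n-k} k!(n-k)! e_k` and `R(ℓ) = ∑_{k≥ℓ} C(k,ℓ) e_k` for `0 ≤ ℓ ≤ n-1`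
form a basis of `ℚ^{n+1}`. -/
theorem stmt2 (n : ℕ) (e : Module.Basis (Fin (n+1)) ℚ (Fin (n+1) → ℚ)) :
    let Rvec : ℕ → (Fin (n+1) → ℚ) :=
      fun ℓ => ∑ k : Fin (n+1), (Nat.choose (k : ℕ) ℓ : ℚ) • e k
    let V : Fin (n+1) → ℚ :=
      ∑ k : Fin (n+1),
        ((-1 : ℚ) ^ (n - (k : ℕ)) * (Nat.factorial (k : ℕ)) *
          (Nat.factorial (n - (k : ℕ)))) • e k
    let g : Fin (n+1) → (Fin (n+1) → ℚ) :=
      fun l => if (l : ℕ) < n then Rvec (l : ℕ) else V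
    LinearIndependent ℚ g ∧ Submodule.span ℚ (Set.range g) = ⊤ := by
  intro Rvec V g
  have hg : g = Fin.snoc (fun i : Fin n => Rvec i) V := by
    funext l
    induction l using Fin.lastCases <;> simp [g]
  let φ := ∑ k : Fin (n + 1), ((-1 : ℚ) ^ (n - (k : ℕ)) * n.choose k) • e.coord k
  have hφR (i : Fin n) : φ (Rvec i) = 0 := by
    simp only [φ, Rvec, e.sum_smul_coord_apply_sum_smul, sum_neg_one_pow_mul_choose_mul_choose,
      if_neg i.is_lt.ne']
  have hφV : φ V = (n + 1).factorial := by
    simp only [φ, V, e.sum_smul_coord_apply_sum_smul,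
      fun k : Fin (n + 1) => neg_one_pow_mul_choose_mul_factorial (R := ℚ) k.is_le, sum_const,
      card_univ, Fintype.card_fin, nsmul_eq_mul, Nat.factorial_succ, Nat.cast_mul, Nat.cast_succ]
  have hli : LinearIndependent ℚ g := hg ▸
    (e.linearIndependent_sum_choose_smul.comp _ (Fin.castSucc_injective n)).finSnoc_of_map_eq_zero
      φ hφR (hφV ▸ Nat.cast_ne_zero.2 (Nat.factorial_ne_zero _))
  exact ⟨hli, hli.span_eq_top_of_card_eq_finrank (by simp)⟩
end

section
/- Let V be a rational vector space, n ≥ 1, and e_0, …, e_n elements of V. Suppose R(ℓ) := ∑_{k=ℓ}^n C(k,ℓ) e_k = 0 for all 0 ≤ ℓ ≤ n-1, and V_0 := ∑_{k=0}^n (-1)^{n-k} k! (n-k)! e_k = 0. Then e_n = 0. -/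
/-!
Gregory–Newton interpolation writes the coefficient function `f` of `V₀` as
`f k = ∑_ℓ C(k,ℓ) Δ^ℓ f(0)` on `0 ≤ k ≤ n`, so `V₀ = ∑_ℓ Δ^ℓ f(0) • R(ℓ)`. All `R(ℓ)` with
`ℓ < n` vanish and `R(n) = e_n`, hence `0 = V₀ = Δ^n f(0) • e_n`; and
`Δ^n f(0) = ∑_k (-1)^(n-k) C(n,k) f(k) = (n+1) n! ≠ 0` because `C(n,k) k! (n-k)! = n!`.
-/

open Finset fwdDiff

section

variable {R V : Type*} [Ring R] [AddCommGroup V] [Module R V]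

lemma eq_sum_range_choose_mul_fwdDiff_iter (f : ℕ → R) {k n : ℕ} (hk : k ≤ n) :
    f k = ∑ ℓ ∈ range (n + 1), (k.choose ℓ : R) * (Δ_[1])^[ℓ] f 0 := by
  have hnewton := shift_eq_sum_fwdDiff_iter 1 f k 0
  simp only [smul_eq_mul, mul_one, zero_add, nsmul_eq_mul] at hnewton
  rw [hnewton]
  refine sum_subset (range_subset_range.2 (by omega)) fun ℓ _ hℓ => ?_
  rw [Nat.choose_eq_zero_of_lt (by simpa using hℓ), Nat.cast_zero, zero_mul]

lemma sum_smul_eq_sum_fwdDiff_iter_smul (f : ℕ → R) (e : ℕ → V) (n : ℕ) :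
    ∑ k ∈ range (n + 1), f k • e k =
      ∑ ℓ ∈ range (n + 1), (Δ_[1])^[ℓ] f 0 • ∑ k ∈ range (n + 1), (k.choose ℓ : R) • e k := by
  calc ∑ k ∈ range (n + 1), f k • e k
      = ∑ k ∈ range (n + 1), ∑ ℓ ∈ range (n + 1), (Δ_[1])^[ℓ] f 0 • (k.choose ℓ : R) • e k := by
        refine sum_congr rfl fun k hk => ?_
        rw [eq_sum_range_choose_mul_fwdDiff_iter f (Nat.lt_succ_iff.1 (mem_range.1 hk)), sum_smul]
        refine sum_congr rfl fun ℓ _ => ?_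
        rw [mul_smul, Nat.cast_smul_eq_nsmul, Nat.cast_smul_eq_nsmul, smul_comm]
    _ = _ := by
        rw [sum_comm]
        simp only [smul_sum]

lemma sum_range_succ_choose_smul (e : ℕ → V) (n : ℕ) :
    ∑ k ∈ range (n + 1), (k.choose n : R) • e k = e n := by
  rw [sum_range_succ, Nat.choose_self, Nat.cast_one, one_smul, add_eq_right]
  exact sum_eq_zero fun k hk => by
    rw [Nat.choose_eq_zero_of_lt (mem_range.1 hk), Nat.cast_zero, zero_smul]

end

lemma fwdDiff_iter_neg_one_pow_mul_factorial_mul_factorial {R : Type*} [CommRing R] (n : ℕ) :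
    (Δ_[1])^[n] (fun k => (-1 : R) ^ (n - k) * k.factorial * (n - k).factorial) 0 =
      (n + 1).factorial := by
  rw [fwdDiff_iter_eq_sum_shift]
  simp only [smul_eq_mul, mul_one, zero_add]
  have hterm : ∀ k ∈ range (n + 1), ((-1 : ℤ) ^ (n - k) * n.choose k) •
      ((-1 : R) ^ (n - k) * k.factorial * (n - k).factorial) = (n.factorial : R) := by
    intro k hk
    have hfac := Nat.choose_mul_factorial_mul_factorial (Nat.lt_succ_iff.1 (mem_range.1 hk))
    simp only [zsmul_eq_mul, Int.cast_mul, Int.cast_pow,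
      Int.cast_neg, Int.cast_one, Int.cast_natCast]
    have hsign : ((-1 : R) ^ (n - k)) ^ 2 = 1 := by
      rw [← pow_mul, mul_comm, pow_mul, neg_one_sq, one_pow]
    rw [← hfac]
    push_cast
    linear_combination (↑(n.choose k) * ↑k.factorial * ↑(n - k).factorial : R) * hsign
  rw [sum_congr rfl hterm, sum_const, card_range, nsmul_eq_mul, Nat.factorial_succ]
  push_cast
  ring

theorem stmt3_general (V : Type*) [AddCommGroup V] [Module ℚ V] (n : ℕ)
    (e : ℕ → V)
    (hR : ∀ ℓ < n, ∑ k ∈ Finset.range (n+1), (Nat.choose k ℓ : ℚ) • e k = 0)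
    (hV : ∑ k ∈ Finset.range (n+1),
        ((-1 : ℚ) ^ (n - k) * (Nat.factorial k) * (Nat.factorial (n - k))) • e k = 0) :
    e n = 0 := by
  rw [sum_smul_eq_sum_fwdDiff_iter_smul, sum_range_succ,
    sum_eq_zero fun ℓ hℓ => by rw [hR ℓ (mem_range.1 hℓ), smul_zero], zero_add,
    sum_range_succ_choose_smul, fwdDiff_iter_neg_one_pow_mul_factorial_mul_factorial] at hV
  exact (smul_eq_zero.1 hV).resolve_left (Nat.cast_ne_zero.2 (Nat.factorial_ne_zero _))

/-- If `R(ℓ) = ∑_{k=ℓ}^n C(k,ℓ) e_k = 0` for all `0 ≤ ℓ ≤ n-1` and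
`∑_{k=0}^n (-1)^{n-k} k!(n-k)! e_k = 0`, then `e_n = 0`. -/
theorem stmt3 (V : Type*) [AddCommGroup V] [Module ℚ V] (n : ℕ) (hn : 1 ≤ n)
    (e : ℕ → V)
    (hR : ∀ ℓ < n, ∑ k ∈ Finset.range (n+1), (Nat.choose k ℓ : ℚ) • e k = 0)
    (hV : ∑ k ∈ Finset.range (n+1),
        ((-1 : ℚ) ^ (n - k) * (Nat.factorial k) * (Nat.factorial (n - k))) • e k = 0) :
    e n = 0 :=
  stmt3_general V n e hR hV
end

section
/- Fix b ≥ 0 and set N = 2b+1. For each subset S ⊆ {1,…,N} with |S| = b let C(S) be an element of a rational vector space, and for each subset T ⊆ {1,…,N} with |T| = b+1 define R(T) := ∑_{S ⊂ T, |S| = b} C(S). Then for every S with |S| = b, C(S) = ∑_{i=0}^{b} (-1)^{i+b} c_i^{-1} ∑_{|T|=b+1, |T∩S|=i} R(T), where c_i = (b+1)·C(b,i). -/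
/-!
Fix `S`. Expanding each `R(T)` and exchanging the sums, the coefficient of `C(S')` on the right
is `∑ w(|T ∩ S|)` over the `(b+1)`-sets `T = S' ∪ {a}`, where `w i = (-1)^(i+b) / c_i`. With
`j = |S' ∩ S|`, the `b - j` choices `a ∈ S \ S'` give `|T ∩ S| = j + 1` and the remaining
`j + 1` choices give `|T ∩ S| = j`, so the coefficient is `(b - j) w(j+1) + (j + 1) w j`.
This vanishes for `j < b` because `(j + 1) C(b, j+1) = (b - j) C(b, j)`, and equals
`(b + 1) w b = 1` for `j = b`, i.e. for `S' = S`.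
-/

open Finset

def inversionWeight (b i : ℕ) : ℚ := (-1) ^ (i + b) * (((b + 1) * b.choose i : ℕ) : ℚ)⁻¹

theorem nsmul_inversionWeight_succ_add_nsmul_inversionWeight (b j : ℕ) (hj : j ≤ b) :
    (b - j) • inversionWeight b (j + 1) + (j + 1) • inversionWeight b j
      = if j = b then 1 else 0 := by
  simp only [inversionWeight, nsmul_eq_mul]
  obtain rfl | hjb := hj.eq_or_lt
  · simp [Nat.cast_add_one_ne_zero]
  have hchoose : ((b.choose (j + 1) : ℕ) : ℚ) * (j + 1) = b.choose j * (b - j : ℕ) := by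
    exact_mod_cast Nat.choose_succ_right_eq b j
  have hpos : ∀ i ≤ b, ((b.choose i : ℕ) : ℚ) ≠ 0 := fun i hi =>
    Nat.cast_ne_zero.2 (Nat.choose_pos hi).ne'
  rw [if_neg hjb.ne, show j + 1 + b = j + b + 1 by ring, pow_succ]
  push_cast
  field_simp [hpos j hj, hpos (j + 1) hjb]
  linear_combination (-1 : ℚ) ^ (j + b) * hchoose

section Supersets

variable {α : Type*} [DecidableEq α] {b : ℕ}

theorem card_insert_inter_of_notMem {a : α} {s : Finset α} (ha : a ∉ s) (u : Finset α) :
    #(insert a s ∩ u) = #(s ∩ u) + if a ∈ u then 1 else 0 := by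
  split_ifs with hau
  · rw [insert_inter_of_mem hau, card_insert_of_notMem fun h => ha (mem_of_mem_inter_left h)]
  · rw [insert_inter_of_notMem hau, add_zero]

theorem card_inter_eq_card_left_iff_of_card_eq {s t : Finset α} (h : #s = #t) :
    #(s ∩ t) = #s ↔ s = t := by
  refine ⟨fun hst => ?_, by rintro rfl; rw [inter_self]⟩
  have hsub : s ⊆ t := inter_eq_left.1 (eq_of_subset_of_card_le inter_subset_left hst.ge)
  exact eq_of_subset_of_card_le hsub h.ge

variable [Fintype α]

theorem sum_powersetCard_succ_filter_superset {M : Type*} [AddCommMonoid M] (s : Finset α)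
    (f : Finset α → M) :
    ∑ t ∈ powersetCard (#s + 1) univ with s ⊆ t, f t = ∑ a ∈ sᶜ, f (insert a s) := by
  rw [← sum_image (insert_inj_on' s)]
  congr 1
  ext t
  simp only [mem_filter, mem_powersetCard, subset_univ, true_and, mem_image, mem_compl]
  rw [exists_eq_insert_iff, eq_comm (a := #t), and_comm]

theorem sum_powersetCard_succ_smul_sum_powersetCard {R M : Type*} [Semiring R] [AddCommMonoid M]
    [Module R M] (k : ℕ) (g : Finset α → R) (C : Finset α → M) :
    ∑ t ∈ powersetCard (k + 1) univ, g t • ∑ s ∈ powersetCard k t, C s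
      = ∑ s ∈ powersetCard k univ, (∑ a ∈ sᶜ, g (insert a s)) • C s := by
  simp_rw [smul_sum]
  rw [sum_comm' (t' := powersetCard k univ)
    (s' := fun s => {t ∈ powersetCard (k + 1) univ | s ⊆ t}) (fun t s => by
      simp only [mem_powersetCard, mem_filter, subset_univ, true_and]; tauto)]
  refine sum_congr rfl fun s hs => ?_
  rw [← (mem_powersetCard.1 hs).2, ← sum_powersetCard_succ_filter_superset, sum_smul]

theorem sum_compl_card_insert_inter {M : Type*} [AddCommMonoid M] (g : ℕ → M) (s u : Finset α) :
    ∑ a ∈ sᶜ, g #(insert a s ∩ u) = #(u \ s) • g (#(s ∩ u) + 1) + #(u ∪ s)ᶜ • g #(s ∩ u) := by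
  have hin : {a ∈ sᶜ | a ∈ u} = u \ s := by ext; simp [and_comm]
  have hout : {a ∈ sᶜ | a ∉ u} = (u ∪ s)ᶜ := by ext; simp [and_comm]
  have hg_in : ∀ a ∈ u \ s, g #(insert a s ∩ u) = g (#(s ∩ u) + 1) := fun a ha => by
    rw [card_insert_inter_of_notMem (mem_sdiff.1 ha).2, if_pos (mem_sdiff.1 ha).1]
  have hg_out : ∀ a ∈ (u ∪ s)ᶜ, g #(insert a s ∩ u) = g #(s ∩ u) := fun a ha => by
    rw [mem_compl, mem_union, not_or] at ha
    rw [card_insert_inter_of_notMem ha.2, if_neg ha.1, add_zero]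
  rw [← sum_filter_add_sum_filter_not sᶜ (· ∈ u), hin, hout, sum_congr rfl hg_in,
    sum_congr rfl hg_out, sum_const, sum_const]

theorem sum_compl_inversionWeight_card_insert_inter (hα : Fintype.card α = 2 * b + 1)
    {S S' : Finset α} (hS : #S = b) (hS' : #S' = b) :
    ∑ a ∈ S'ᶜ, inversionWeight b #(insert a S' ∩ S) = if S' = S then 1 else 0 := by
  have hj : #(S' ∩ S) ≤ b := (card_le_card inter_subset_right).trans_eq hS
  have hsdiff : #(S \ S') = b - #(S' ∩ S) := by rw [card_sdiff, hS]
  have hcompl : #(S ∪ S')ᶜ = #(S' ∩ S) + 1 := by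
    have := card_union_add_card_inter S S'
    rw [card_compl, hα, inter_comm S] at *
    omega
  rw [sum_compl_card_insert_inter, hsdiff, hcompl, nsmul_inversionWeight_succ_add_nsmul_inversionWeight b _ hj]
  exact if_congr (by rw [← card_inter_eq_card_left_iff_of_card_eq (hS'.trans hS.symm), hS'])
    rfl rfl

end Supersets

/-- Inversion formula: for any assignment `C` of vectors to the `b`-subsets of a
`(2b+1)`-set, with `R(T) = ∑_{S ⊂ T, |S|=b} C(S)` for `(b+1)`-subsets `T`, one has
`C(S) = ∑_{i=0}^b (-1)^{i+b} c_i⁻¹ ∑_{|T|=b+1, |T∩S|=i} R(T)` where `c_i = (b+1) C(b,i)`. -/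
theorem stmt4 (b : ℕ) (V : Type*) [AddCommGroup V] [Module ℚ V]
    (C : Finset (Fin (2*b+1)) → V) :
    ∀ S : Finset (Fin (2*b+1)), S.card = b →
      C S = ∑ i ∈ Finset.range (b+1),
        ((-1 : ℚ) ^ (i + b) * (((b+1) * Nat.choose b i : ℕ) : ℚ)⁻¹) •
          ∑ T ∈ (Finset.powersetCard (b+1) (Finset.univ : Finset (Fin (2*b+1)))).filter
              (fun T => (T ∩ S).card = i),
            ∑ S' ∈ Finset.powersetCard b T, C S' := by
  intro S hS
  calc C S = ∑ S' ∈ powersetCard b univ, (if S' = S then 1 else 0 : ℚ) • C S' := by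
        simp [ite_smul, hS]
    _ = ∑ T ∈ powersetCard (b + 1) univ,
          inversionWeight b #(T ∩ S) • ∑ S' ∈ powersetCard b T, C S' := by
        rw [sum_powersetCard_succ_smul_sum_powersetCard]
        refine sum_congr rfl fun S' hS' => ?_
        rw [sum_compl_inversionWeight_card_insert_inter (Fintype.card_fin _) hS
          (mem_powersetCard.1 hS').2]
    _ = _ := by
        rw [← sum_fiberwise_of_maps_to (t := range (b + 1)) (g := fun T => #(T ∩ S))
          fun T _ => mem_range_succ_iff.2 ((card_le_card inter_subset_right).trans_eq hS)]
        refine sum_congr rfl fun i _ => ?_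
        rw [smul_sum]
        exact sum_congr rfl fun T hT => by rw [(mem_filter.1 hT).2]; rfl
end

section
/- Fix b ≥ 0 and N = 2b+1. Suppose C : {S ⊆ Fin N : |S| = b} → V is a function to a rational vector space such that for every (b+1)-element subset T of {1,…,N}, ∑_{S ⊂ T, |S|=b} C(S) = 0. Then C(S) = 0 for all S. -/
/-!
Fix a `b`-set `A` and add up the relations for all `(b+1)`-sets `T`, the one for `T` weighted by
`w(|T ∩ A|)` with `w(i) = (-1)^i i! (b-i)!`. A `b`-set `S` with `|S ∩ A| = i` lies in `b - i` sets
`T` with `|T ∩ A| = i + 1` and in `i + 1` with `|T ∩ A| = i`, so `C(S)` gets the coefficient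
`(b - i) w(i+1) + (i + 1) w(i)`. The weight is chosen to make this vanish for `i < b`, that is for
`S ≠ A`, while for `S = A` it is `(b + 1) w(b) ≠ 0`.
-/

open Finset Nat

def alternatingWeight (b i : ℕ) : ℚ := (-1) ^ i * (i ! * (b - i)! : ℕ)

theorem alternatingWeight_combination_eq_zero {b i : ℕ} (hi : i < b) :
    (b - i) • alternatingWeight b (i + 1) + (i + 1) • alternatingWeight b i = 0 := by
  obtain ⟨j, rfl⟩ := Nat.exists_eq_add_of_lt hi
  simp only [alternatingWeight, nsmul_eq_mul, show i + j + 1 - i = j + 1 by omega,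
    show i + j + 1 - (i + 1) = j by omega, factorial_succ]
  push_cast
  ring

theorem alternatingWeight_self_ne_zero (b : ℕ) : (b + 1) • alternatingWeight b b ≠ 0 := by
  simp only [alternatingWeight, nsmul_eq_mul]
  positivity

section Incidence

variable {α M : Type*} [Fintype α] [DecidableEq α] [AddCommMonoid M]

theorem sum_powersetCard_succ_sum_powersetCard (k : ℕ) (f : Finset α → Finset α → M) :
    ∑ T ∈ powersetCard (k + 1) univ, ∑ S ∈ powersetCard k T, f T S =
      ∑ S ∈ powersetCard k univ, ∑ x ∈ Sᶜ, f (insert x S) S := by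
  calc ∑ T ∈ powersetCard (k + 1) univ, ∑ S ∈ powersetCard k T, f T S
      = ∑ S ∈ powersetCard k univ, ∑ T ∈ Sᶜ.image (insert · S), f T S := by
        refine sum_comm' fun T S => ?_
        simp only [mem_powersetCard, subset_univ, true_and, mem_image, mem_compl]
        rw [exists_eq_insert_iff]
        grind
    _ = ∑ S ∈ powersetCard k univ, ∑ x ∈ Sᶜ, f (insert x S) S :=
        sum_congr rfl fun _ _ =>
          sum_image fun _ hx _ _ hxy => (insert_inj (mem_compl.mp hx)).mp hxy

theorem sum_compl_comp_card_insert_inter (S A : Finset α) (g : ℕ → M) :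
    ∑ x ∈ Sᶜ, g #(insert x S ∩ A) = #(A \ S) • g (#(S ∩ A) + 1) + #(Sᶜ \ A) • g #(S ∩ A) := by
  rw [← sum_filter_add_sum_filter_not Sᶜ (· ∈ A), filter_mem_eq_inter, inter_comm,
    ← sdiff_eq_inter_compl, filter_notMem_eq_sdiff, ← sum_const, ← sum_const]
  congr 1 <;> refine sum_congr rfl fun x hx => ?_
  · rw [mem_sdiff] at hx
    rw [insert_inter_of_mem hx.1, card_insert_of_notMem fun h => hx.2 (mem_inter.mp h).1]
  · rw [mem_sdiff] at hx
    rw [insert_inter_of_notMem hx.2]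

theorem sum_alternatingWeight_insert_inter {S A : Finset α} {b : ℕ}
    (hα : Fintype.card α = 2 * b + 1) (hS : #S = b) (hA : #A = b) :
    ∑ x ∈ Sᶜ, alternatingWeight b #(insert x S ∩ A) =
      (b - #(S ∩ A)) • alternatingWeight b (#(S ∩ A) + 1) +
        (#(S ∩ A) + 1) • alternatingWeight b #(S ∩ A) := by
  have hunion : #(S ∪ A) + #(S ∩ A) = b + b := by rw [card_union_add_card_inter, hS, hA]
  rw [sum_compl_comp_card_insert_inter, card_sdiff, hA, sdiff_eq_inter_compl,
    ← compl_union, card_compl, hα, show 2 * b + 1 - #(S ∪ A) = #(S ∩ A) + 1 by omega]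

theorem sum_alternatingWeight_insert_inter_eq_zero {S A : Finset α} {b : ℕ}
    (hα : Fintype.card α = 2 * b + 1) (hS : #S = b) (hA : #A = b) (hSA : S ≠ A) :
    ∑ x ∈ Sᶜ, alternatingWeight b #(insert x S ∩ A) = 0 := by
  have hlt : #(S ∩ A) < b := by
    by_contra! hle
    have hSA' : S ⊆ A := inter_eq_left.mp (eq_of_subset_of_card_le inter_subset_left (by omega))
    exact hSA (eq_of_subset_of_card_le hSA' (by omega))
  rw [sum_alternatingWeight_insert_inter hα hS hA,
    alternatingWeight_combination_eq_zero hlt]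

theorem sum_alternatingWeight_insert_inter_self_ne_zero {A : Finset α} {b : ℕ}
    (hα : Fintype.card α = 2 * b + 1) (hA : #A = b) :
    ∑ x ∈ Aᶜ, alternatingWeight b #(insert x A ∩ A) ≠ 0 := by
  rw [sum_alternatingWeight_insert_inter hα hA hA, inter_self, hA, Nat.sub_self,
    zero_smul, zero_add]
  exact alternatingWeight_self_ne_zero b

end Incidence

/-- If for every `(b+1)`-subset `T` of a `(2b+1)`-set the sum of `C(S)` over the
`b`-subsets `S ⊂ T` vanishes, then all `C(S)` vanish. -/
theorem stmt5 (b : ℕ) (V : Type*) [AddCommGroup V] [Module ℚ V]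
    (C : Finset (Fin (2*b+1)) → V)
    (h : ∀ T : Finset (Fin (2*b+1)), T.card = b + 1 →
      ∑ S ∈ Finset.powersetCard b T, C S = 0) :
    ∀ S : Finset (Fin (2*b+1)), S.card = b → C S = 0 := by
  intro A hA
  have hα : Fintype.card (Fin (2 * b + 1)) = 2 * b + 1 := Fintype.card_fin _
  have hweighted : (∑ x ∈ Aᶜ, alternatingWeight b #(insert x A ∩ A)) • C A = 0 :=
    calc (∑ x ∈ Aᶜ, alternatingWeight b #(insert x A ∩ A)) • C A
        = ∑ S ∈ powersetCard b univ, (∑ x ∈ Sᶜ, alternatingWeight b #(insert x S ∩ A)) • C S := by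
          rw [sum_eq_single_of_mem A (mem_powersetCard.mpr ⟨subset_univ A, hA⟩)]
          intro S hS hSA
          rw [sum_alternatingWeight_insert_inter_eq_zero hα (mem_powersetCard.mp hS).2 hA hSA,
            zero_smul]
      _ = ∑ T ∈ powersetCard (b + 1) univ, ∑ S ∈ powersetCard b T,
            alternatingWeight b #(T ∩ A) • C S := by
          simp only [sum_smul, sum_powersetCard_succ_sum_powersetCard]
      _ = 0 := by
          refine sum_eq_zero fun T hT => ?_
          rw [← smul_sum, h T (mem_powersetCard.mp hT).2, smul_zero]
  exact (smul_eq_zero.mp hweighted).resolve_left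
    (sum_alternatingWeight_insert_inter_self_ne_zero hα hA)
end

section
/- Let M be the (number of b-subsets) × (number of (b+1)-subsets) inclusion matrix of a (2b+1)-set, with M_{S,T} = 1 if S ⊂ T and 0 otherwise. Then M has rank C(2b+1, b) over ℚ (full row rank). -/
open Finset

namespace Stmt14Aux

/-- Number of `k`-subsets containing a fixed set `A`. -/
lemma count_supersets (n k : ℕ) (A : Finset (Fin n)) (hA : A.card ≤ k) :
    (Finset.univ.filter fun T : Finset (Fin n) => A ⊆ T ∧ T.card = k).card
      = (n - A.card).choose (k - A.card) := by
  have hc : Aᶜ.card = n - A.card := by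
    rw [Finset.card_compl, Fintype.card_fin]
  rw [← hc, ← Finset.card_powersetCard (k - A.card) Aᶜ]
  apply Finset.card_bij (fun T _ => T \ A)
  · intro T hT
    rw [Finset.mem_filter] at hT
    obtain ⟨-, h1, h2⟩ := hT
    rw [Finset.mem_powersetCard]
    constructor
    · intro a ha
      rw [Finset.mem_sdiff] at ha
      simpa using ha.2
    · rw [Finset.card_sdiff_of_subset h1, h2]
  · intro T1 h1 T2 h2 he
    rw [Finset.mem_filter] at h1 h2
    have : T1 \ A ∪ A = T2 \ A ∪ A := by rw [he]
    rwa [Finset.sdiff_union_of_subset h1.2.1, Finset.sdiff_union_of_subset h2.2.1] at this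
  · intro B hB
    rw [Finset.mem_powersetCard] at hB
    have hd : Disjoint B A := Finset.disjoint_left.mpr fun a haB haA =>
      (Finset.mem_compl.mp (hB.1 haB)) haA
    refine ⟨B ∪ A, ?_, ?_⟩
    · rw [Finset.mem_filter]
      refine ⟨Finset.mem_univ _, Finset.subset_union_right, ?_⟩
      rw [Finset.card_union_of_disjoint hd, hB.2]
      omega
    · rw [Finset.union_sdiff_right]
      exact Finset.sdiff_eq_self_of_disjoint hd

/-- Number of `m`-subsets of a fixed set `B`. -/
lemma count_subsets (n m : ℕ) (B : Finset (Fin n)) :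
    (Finset.univ.filter fun R : Finset (Fin n) => R ⊆ B ∧ R.card = m).card
      = B.card.choose m := by
  rw [← Finset.card_powersetCard m B]
  congr 1
  ext R
  simp [Finset.mem_powersetCard]

/-- The key counting identity `(DU)_{S,S'} - (UD)_{S,S'} = δ_{S,S'}` at middle level. -/
lemma count_delta (b : ℕ) (S S' : Finset (Fin (2*b+1)))
    (hS : S.card = b) (hS' : S'.card = b) :
    (Finset.univ.filter fun T : Finset (Fin (2*b+1)) =>
        (S ⊆ T ∧ S' ⊆ T) ∧ T.card = b+1).card
      = (Finset.univ.filter fun R : Finset (Fin (2*b+1)) =>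
          (R ⊆ S ∧ R ⊆ S') ∧ R.card + 1 = b).card
        + (if S = S' then 1 else 0) := by
  have hTfilter : (Finset.univ.filter fun T : Finset (Fin (2*b+1)) =>
        (S ⊆ T ∧ S' ⊆ T) ∧ T.card = b+1)
      = (Finset.univ.filter fun T : Finset (Fin (2*b+1)) =>
        (S ∪ S') ⊆ T ∧ T.card = b+1) := by
    apply Finset.filter_congr
    intro T _
    rw [Finset.union_subset_iff]
  rw [hTfilter]
  have hcard : (S ∪ S').card + (S ∩ S').card = 2 * b :=
    by rw [Finset.card_union_add_card_inter, hS, hS']; ring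
  rcases Nat.eq_zero_or_pos b with hb | hb
  · -- b = 0 : S = S' = ∅, down-sets empty
    subst hb
    have hSe : S = ∅ := Finset.card_eq_zero.mp hS
    have hS'e : S' = ∅ := Finset.card_eq_zero.mp hS'
    subst hSe; subst hS'e
    have h2 : (Finset.univ.filter fun R : Finset (Fin (2*0+1)) =>
        ((R ⊆ (∅ : Finset (Fin (2*0+1)))) ∧ R ⊆ ∅) ∧ R.card + 1 = 0) = ∅ := by
      apply Finset.filter_false_of_mem
      intro R _
      simp
    rw [h2, Finset.card_empty, if_pos rfl]
    have := count_supersets (2*0+1) 1 (∅ ∪ ∅ : Finset (Fin (2*0+1))) (by simp)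
    simpa using this
  · -- b ≥ 1
    have hRcount : (Finset.univ.filter fun R : Finset (Fin (2*b+1)) =>
          (R ⊆ S ∧ R ⊆ S') ∧ R.card + 1 = b).card
        = (S ∩ S').card.choose (b-1) := by
      rw [← count_subsets (2*b+1) (b-1) (S ∩ S')]
      congr 1
      apply Finset.filter_congr
      intro R _
      constructor
      · rintro ⟨⟨h1, h2⟩, h3⟩
        exact ⟨Finset.subset_inter h1 h2, by omega⟩
      · rintro ⟨h1, h2⟩
        exact ⟨⟨h1.trans Finset.inter_subset_left, h1.trans Finset.inter_subset_right⟩,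
          by omega⟩
    rw [hRcount]
    by_cases hSS : S = S'
    · subst hSS
      rw [if_pos rfl]
      rw [Finset.union_self, Finset.inter_self, hS]
      rw [count_supersets (2*b+1) (b+1) S (by omega)]
      rw [hS]
      have h1 : 2*b+1-b = b+1 := by omega
      have h2 : b+1-b = 1 := by omega
      rw [h1, h2, Nat.choose_one_right]
      have h3 : b - 1 = b - 1 := rfl
      have h4 : (b:ℕ).choose (b-1) = b := by
        have := Nat.choose_symm (n := b) (k := 1) (by omega)
        rw [this, Nat.choose_one_right]
      rw [h4]
    · rw [if_neg hSS]
      have hlt : (S ∩ S').card < b := by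
        by_contra h
        push_neg at h
        have hsub : S ∩ S' ⊆ S := Finset.inter_subset_left
        have : S ∩ S' = S := Finset.eq_of_subset_of_card_le hsub (by omega)
        have hSsub : S ⊆ S' := by
          rw [← this]; exact Finset.inter_subset_right
        exact hSS (Finset.eq_of_subset_of_card_le hSsub (by omega))
      rcases Nat.lt_or_ge (S ∩ S').card (b-1) with hc | hc
      · -- intersection too small: both sides zero
        have hz : (S ∩ S').card.choose (b-1) = 0 := Nat.choose_eq_zero_of_lt hc
        rw [hz]
        have hempty : (Finset.univ.filter fun T : Finset (Fin (2*b+1)) =>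
            (S ∪ S') ⊆ T ∧ T.card = b+1) = ∅ := by
          apply Finset.filter_false_of_mem
          rintro T - ⟨h1, h2⟩
          have := Finset.card_le_card h1
          omega
        rw [hempty]
        simp
      · -- intersection has card b-1
        have hceq : (S ∩ S').card = b - 1 := by omega
        have hueq : (S ∪ S').card = b + 1 := by omega
        rw [count_supersets (2*b+1) (b+1) (S ∪ S') (by omega)]
        rw [hueq, hceq, Nat.choose_self]
        have : 2*b+1 - (b+1) = b := by omega
        rw [this]
        simp

end Stmt14Aux

namespace Stmt14Aux2
open Stmt14Aux

/-- Transfer a filter-count on a subtype of finsets to a filter-count on finsets. -/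
lemma card_subtype_filter {m : Type*} [Fintype m] [DecidableEq m]
    (p : Finset m → Prop) [DecidablePred p] (q : Finset m → Prop) [DecidablePred q] :
    (Finset.univ.filter fun T : {T : Finset m // p T} => q T.1).card
      = (Finset.univ.filter fun T : Finset m => q T ∧ p T).card := by
  apply Finset.card_bij (fun T _ => T.1)
  · intro T hT
    rw [Finset.mem_filter] at *
    exact ⟨Finset.mem_univ _, hT.2, T.2⟩
  · intro T1 _ T2 _ h
    exact Subtype.ext h
  · intro T hT
    rw [Finset.mem_filter] at hT
    exact ⟨⟨T, hT.2.2⟩, by rw [Finset.mem_filter]; exact ⟨Finset.mem_univ _, hT.2.1⟩, rfl⟩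

/-- Expanding the square of an "incidence sum". -/
lemma sum_sq_expand {ι κ : Type*} [Fintype ι] [Fintype κ] [DecidableEq ι]
    (r : ι → κ → Prop) [∀ i k, Decidable (r i k)] (x : ι → ℚ) :
    ∑ k : κ, (∑ i : ι, if r i k then x i else 0)^2
      = ∑ i : ι, ∑ j : ι, x i * x j *
          ((Finset.univ.filter fun k : κ => r i k ∧ r j k).card : ℚ) := by
  have expand : ∀ k : κ, (∑ i : ι, if r i k then x i else 0)^2
      = ∑ i : ι, ∑ j : ι, if r i k ∧ r j k then x i * x j else 0 := by
    intro k
    rw [sq, Finset.sum_mul_sum]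
    refine Finset.sum_congr rfl fun i _ => Finset.sum_congr rfl fun j _ => ?_
    by_cases h1 : r i k <;> by_cases h2 : r j k <;> simp [h1, h2]
  simp_rw [expand]
  rw [Finset.sum_comm]
  refine Finset.sum_congr rfl fun i _ => ?_
  rw [Finset.sum_comm]
  refine Finset.sum_congr rfl fun j _ => ?_
  rw [← Finset.sum_filter, Finset.sum_const, nsmul_eq_mul, mul_comm]

end Stmt14Aux2
open Finset Matrix Stmt14Aux Stmt14Aux2 in
/-- The inclusion matrix between `b`-subsets and `(b+1)`-subsets of a `(2b+1)`-set has
full row rank `C(2b+1, b)` over `ℚ`. -/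
theorem stmt14 (b : ℕ) :
    Matrix.rank (fun (S : {S : Finset (Fin (2*b+1)) // S.card = b})
        (T : {T : Finset (Fin (2*b+1)) // T.card = b+1}) =>
      if S.1 ⊆ T.1 then (1 : ℚ) else 0) = Nat.choose (2*b+1) b := by
  classical
  set M : Matrix {S : Finset (Fin (2*b+1)) // S.card = b}
      {T : Finset (Fin (2*b+1)) // T.card = b+1} ℚ :=
    fun S T => if S.1 ⊆ T.1 then (1 : ℚ) else 0 with hM
  have hinj : Function.Injective (Matrix.mulVecLin Mᵀ) := by
    rw [← LinearMap.ker_eq_bot, LinearMap.ker_eq_bot']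
    intro x hx
    have h0 : ∀ T : {T : Finset (Fin (2*b+1)) // T.card = b+1},
        ∑ S : {S : Finset (Fin (2*b+1)) // S.card = b},
          (if S.1 ⊆ T.1 then x S else 0) = 0 := by
      intro T
      have := congrFun hx T
      simpa [Matrix.mulVecLin_apply, Matrix.mulVec, Matrix.vecMul, dotProduct, hM,
        Matrix.transpose_apply, Matrix.transpose, Matrix.of_apply, ite_mul, mul_ite, mul_one, mul_zero] using this
    have hA := sum_sq_expand
      (fun (S : {S : Finset (Fin (2*b+1)) // S.card = b})
           (T : {T : Finset (Fin (2*b+1)) // T.card = b+1}) => S.1 ⊆ T.1) x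
    have hB := sum_sq_expand
      (fun (S : {S : Finset (Fin (2*b+1)) // S.card = b})
           (R : {R : Finset (Fin (2*b+1)) // R.card + 1 = b}) => R.1 ⊆ S.1) x
    -- the counting identity, on subtypes, cast to ℚ
    have hdelta : ∀ S S' : {S : Finset (Fin (2*b+1)) // S.card = b},
        ((Finset.univ.filter fun T : {T : Finset (Fin (2*b+1)) // T.card = b+1} =>
            S.1 ⊆ T.1 ∧ S'.1 ⊆ T.1).card : ℚ)
          = ((Finset.univ.filter fun R : {R : Finset (Fin (2*b+1)) // R.card + 1 = b} =>
              R.1 ⊆ S.1 ∧ R.1 ⊆ S'.1).card : ℚ) + (if S = S' then 1 else 0) := by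
      intro S S'
      have h1 := card_subtype_filter (fun T : Finset (Fin (2*b+1)) => T.card = b+1)
        (fun T => S.1 ⊆ T ∧ S'.1 ⊆ T)
      have h2 := card_subtype_filter (fun R : Finset (Fin (2*b+1)) => R.card + 1 = b)
        (fun R => R ⊆ S.1 ∧ R ⊆ S'.1)
      have h3 := count_delta b S.1 S'.1 S.2 S'.2
      have h4 : (if S = S' then (1:ℕ) else 0) = (if S.1 = S'.1 then 1 else 0) := by
        simp [Subtype.ext_iff]
      have : (Finset.univ.filter fun T : {T : Finset (Fin (2*b+1)) // T.card = b+1} =>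
            S.1 ⊆ T.1 ∧ S'.1 ⊆ T.1).card
          = (Finset.univ.filter fun R : {R : Finset (Fin (2*b+1)) // R.card + 1 = b} =>
              R.1 ⊆ S.1 ∧ R.1 ⊆ S'.1).card + (if S = S' then 1 else 0) := by
        rw [h1, h2, h3, h4]
      rw [this]
      push_cast
      split_ifs <;> simp
    -- LHS of hA vanishes
    have hA0 : ∑ S : {S : Finset (Fin (2*b+1)) // S.card = b},
        ∑ S' : {S : Finset (Fin (2*b+1)) // S.card = b}, x S * x S' *
          ((Finset.univ.filter fun T : {T : Finset (Fin (2*b+1)) // T.card = b+1} =>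
            S.1 ⊆ T.1 ∧ S'.1 ⊆ T.1).card : ℚ) = 0 := by
      rw [← hA]
      apply Finset.sum_eq_zero
      intro T _
      rw [h0 T]
      ring
    -- key identity
    have hkey : ∑ S : {S : Finset (Fin (2*b+1)) // S.card = b}, x S ^ 2
        + ∑ R : {R : Finset (Fin (2*b+1)) // R.card + 1 = b},
            (∑ S : {S : Finset (Fin (2*b+1)) // S.card = b},
              if R.1 ⊆ S.1 then x S else 0)^2 = 0 := by
      rw [hB, ← hA0, ← Finset.sum_add_distrib]
      refine Finset.sum_congr rfl fun S _ => ?_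
      simp only [hdelta, mul_add, mul_ite, mul_one, mul_zero, Finset.sum_add_distrib,
        Finset.sum_ite_eq, Finset.mem_univ, if_true]
      ring
    have h1 : (0:ℚ) ≤ ∑ S : {S : Finset (Fin (2*b+1)) // S.card = b}, x S ^ 2 :=
      Finset.sum_nonneg fun _ _ => sq_nonneg _
    have h2 : (0:ℚ) ≤ ∑ R : {R : Finset (Fin (2*b+1)) // R.card + 1 = b},
        (∑ S : {S : Finset (Fin (2*b+1)) // S.card = b},
          if R.1 ⊆ S.1 then x S else 0)^2 :=
      Finset.sum_nonneg fun _ _ => sq_nonneg _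
    have hsum0 : ∑ S : {S : Finset (Fin (2*b+1)) // S.card = b}, x S ^ 2 = 0 := by
      linarith
    funext S
    have hS0 := (Finset.sum_eq_zero_iff_of_nonneg
      (fun i _ => sq_nonneg (x i))).mp hsum0 S (Finset.mem_univ S)
    simpa using sq_eq_zero_iff.mp hS0
  have hrank : Mᵀ.rank = Fintype.card {S : Finset (Fin (2*b+1)) // S.card = b} := by
    unfold Matrix.rank
    rw [LinearMap.finrank_range_of_inj hinj, Module.finrank_fintype_fun_eq_card]
  have := Matrix.rank_transpose M
  rw [← this, hrank, Fintype.card_finset_len, Fintype.card_fin]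
end
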